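/- arXiv:1006.2746 — 2 statements merged into one kernel-verified Lean document; each statement's English description precedes it below -/
import Mathlib

section
/- Let H be a complex Hilbert space and γ ∈ ℂ with Re γ ≤ 0. For each n ∈ ℕ let P^{(n)}_1, …, P^{(n)}_{2^n} be pairwise commuting orthogonal projections on H such that for every x ∈ H the vectors 2^{−n} Σ_{i=1}^{2^n} (x − P^{(n)}_i x) converge to 0 in norm as n → ∞. For S ⊆ {1,…,2^n} put E^{(n)}_S := ∏_{i∈S} (1 − P^{(n)}_i) · ∏_{i∉S} P^{(n)}_i. Then for every ψ ∈ H, ‖ Σ_{S ⊆ {1,…,2^n}} e^{γ·#S/2^n} E^{(n)}_S ψ ‖ → ‖ψ‖ as n → ∞. -/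
/-!
For a commuting family of projections `P i`, the products `E S = prodInOut P S` are pairwise
orthogonal projections summing to `1`, and the "number operator" `∑ i, (1 - P i)` acts on the range
of `E S` as multiplication by `#S`; these identities are checked in the commutative subring
generated by the `P i`. Writing `w S = ‖E S ψ‖ ^ 2`, we get `‖ψ‖ ^ 2 = ∑ S, w S`, the squared
norm in question is `∑ S, exp (2 Re γ #S / 2 ^ n) * w S`, and the averaged defect pairs with `ψ`
to `∑ S, (#S / 2 ^ n) * w S`. As `1 + x ≤ exp x ≤ 1` for `x ≤ 0`, the squared norm is squeezed
between `‖ψ‖ ^ 2 + 2 Re γ · Re ⟪2⁻ⁿ ∑ i, (ψ - P i ψ), ψ⟫` and `‖ψ‖ ^ 2`.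
-/

open Filter Topology

/-- For pairwise commuting idempotents/projections `p i`, the product
`∏_{i ∈ S} (1 - p i) * ∏_{i ∉ S} p i` (taken in increasing order of indices; by
commutativity the order is irrelevant). -/
noncomputable def prodInOut {N : ℕ} {A : Type*} [Ring A] (p : Fin N → A) (S : Finset (Fin N)) :
    A :=
  ((S.sort (· ≤ ·)).map (fun i => 1 - p i)).prod * ((Sᶜ.sort (· ≤ ·)).map p).prod

open Finset
open scoped InnerProductSpace ComplexConjugate

variable {N : ℕ}

theorem map_prodInOut {A B F : Type*} [Ring A] [Ring B] [FunLike F A B] [RingHomClass F A B]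
    (φ : F) (p : Fin N → A) (S : Finset (Fin N)) :
    φ (prodInOut p S) = prodInOut (fun i => φ (p i)) S := by
  simp [prodInOut, map_list_prod, Function.comp_def]

theorem prodInOut_eq_prod {R : Type*} [CommRing R] (p : Fin N → R) (S : Finset (Fin N)) :
    prodInOut p S = (∏ i ∈ S, (1 - p i)) * ∏ i ∈ Sᶜ, p i := by
  simp only [prodInOut, ← Multiset.prod_coe, ← Multiset.map_coe, sort_eq, prod_eq_multiset_prod]

section CommRing

variable {R : Type*} [CommRing R] (p : Fin N → R)

theorem sum_prodInOut : ∑ S, prodInOut p S = 1 := by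
  simpa [prodInOut_eq_prod, compl_eq_univ_sdiff] using (prod_add (fun i => 1 - p i) p univ).symm

variable {p} (hp : ∀ i, IsIdempotentElem (p i))
include hp

theorem one_sub_mul_prodInOut (S : Finset (Fin N)) (i : Fin N) :
    (1 - p i) * prodInOut p S = if i ∈ S then prodInOut p S else 0 := by
  rw [prodInOut_eq_prod]
  split_ifs with hi
  · rw [← mul_prod_erase _ _ hi, ← mul_assoc, ← mul_assoc, (hp i).one_sub.eq]
  · rw [← mul_prod_erase _ _ (mem_compl.2 hi)]
    calc (1 - p i) * ((∏ j ∈ S, (1 - p j)) * (p i * ∏ j ∈ Sᶜ.erase i, p j))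
        = (1 - p i) * p i * ((∏ j ∈ S, (1 - p j)) * ∏ j ∈ Sᶜ.erase i, p j) := by ring
      _ = 0 := by rw [(hp i).one_sub_mul_self, zero_mul]

theorem prodInOut_mul_prodInOut_of_ne {S T : Finset (Fin N)} (hST : S ≠ T) :
    prodInOut p S * prodInOut p T = 0 := by
  wlog h : ¬ T ⊆ S generalizing S T
  · rw [mul_comm]; exact this hST.symm fun hS => hST (Subset.antisymm hS (not_not.1 h))
  obtain ⟨i, hiT, hiS⟩ := not_subset.1 h
  have := congrArg (prodInOut p S * ·) (one_sub_mul_prodInOut hp T i)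
  simp only [if_pos hiT] at this
  rw [← this, ← mul_assoc, mul_comm (prodInOut p S), one_sub_mul_prodInOut hp S i, if_neg hiS,
    zero_mul]

theorem sum_one_sub_mul_prodInOut (S : Finset (Fin N)) :
    ∑ i, (1 - p i) * prodInOut p S = #S • prodInOut p S := by
  simp [one_sub_mul_prodInOut hp, sum_ite_mem]

end CommRing

universe u

theorem exists_commRing_lift {ι : Type*} {A : Type u} [Ring A] (p : ι → A)
    (hc : ∀ i j, Commute (p i) (p j)) :
    ∃ (B : Type u) (_ : CommRing B) (φ : B →+* A) (q : ι → B),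
      Function.Injective φ ∧ (fun i => φ (q i)) = p := by
  open scoped IsMulCommutative in
  have := Subring.isMulCommutative_closure (s := Set.range p) <| by
    rintro _ ⟨i, rfl⟩ _ ⟨j, rfl⟩; exact hc i j
  exact ⟨_, inferInstance, (Subring.closure (Set.range p)).subtype,
    fun i => ⟨p i, Subring.subset_closure ⟨i, rfl⟩⟩, Subtype.val_injective, rfl⟩

section Ring

variable {A : Type*} [Ring A] {p : Fin N → A} (hc : ∀ i j, Commute (p i) (p j))
include hc

theorem sum_prodInOut_of_commute : ∑ S, prodInOut p S = 1 := by
  obtain ⟨B, _, φ, q, -, rfl⟩ := exists_commRing_lift p hc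
  simp_rw [← map_prodInOut, ← map_sum, sum_prodInOut, map_one]

variable (hp : ∀ i, IsIdempotentElem (p i))
include hp

theorem prodInOut_mul_prodInOut_of_commute {S T : Finset (Fin N)} (hST : S ≠ T) :
    prodInOut p S * prodInOut p T = 0 := by
  obtain ⟨B, _, φ, q, hφ, rfl⟩ := exists_commRing_lift p hc
  have hq i : IsIdempotentElem (q i) := hφ <| by rw [map_mul]; exact hp i
  rw [← map_prodInOut, ← map_prodInOut, ← map_mul, prodInOut_mul_prodInOut_of_ne hq hST,
    map_zero]

theorem sum_one_sub_mul_prodInOut_of_commute (S : Finset (Fin N)) :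
    ∑ i, (1 - p i) * prodInOut p S = #S • prodInOut p S := by
  obtain ⟨B, _, φ, q, hφ, rfl⟩ := exists_commRing_lift p hc
  have hq i : IsIdempotentElem (q i) := hφ <| by rw [map_mul]; exact hp i
  simp_rw [← map_prodInOut, ← map_one φ, ← map_sub, ← map_mul, ← map_sum,
    sum_one_sub_mul_prodInOut hq, map_nsmul]

end Ring

theorem IsStarProjection.list_prod {R : Type*} [Semiring R] [StarRing R] {l : List R}
    (hl : ∀ a ∈ l, IsStarProjection a) (hc : l.Pairwise Commute) : IsStarProjection l.prod := by
  induction l with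
  | nil => exact .one R
  | cons a l ih =>
    rw [List.forall_mem_cons] at hl
    rw [List.pairwise_cons] at hc
    exact hl.1.mul (ih hl.2 hc.2) (Commute.list_prod_right _ _ hc.1)

theorem isStarProjection_prodInOut {A : Type*} [Ring A] [StarRing A] {p : Fin N → A}
    (hp : ∀ i, IsStarProjection (p i)) (hc : ∀ i j, Commute (p i) (p j)) (S : Finset (Fin N)) :
    IsStarProjection (prodInOut p S) := by
  have hc' i j : Commute (1 - p i) (p j) := (Commute.one_left _).sub_left (hc i j)
  refine .mul (.list_prod ?_ ?_) (.list_prod ?_ ?_) ?_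
  · simpa using fun i _ => (hp i).one_sub
  · exact List.pairwise_map.2 <| List.pairwise_of_forall fun i j =>
      (Commute.one_right _).sub_right (hc' i j)
  · simpa using fun i _ => hp i
  · exact List.pairwise_map.2 <| List.pairwise_of_forall hc
  · exact Commute.list_prod_right _ _ <| List.forall_mem_map.2 fun j _ =>
      Commute.list_prod_left _ _ <| List.forall_mem_map.2 fun i _ => hc' i j

section Orthogonal

variable {ι 𝕜 E : Type*} [Fintype ι] [RCLike 𝕜] [NormedAddCommGroup E] [InnerProductSpace 𝕜 E]
  {v : ι → E} (hv : Pairwise fun i j => ⟪v i, v j⟫_𝕜 = 0)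
include hv

theorem inner_sum_smul_sum_smul_of_pairwise_orthogonal (c d : ι → 𝕜) :
    ⟪∑ i, c i • v i, ∑ i, d i • v i⟫_𝕜 = ∑ i, conj (c i) * d i * (‖v i‖ : 𝕜) ^ 2 := by
  classical
  simp_rw [sum_inner, inner_sum, inner_smul_left, inner_smul_right]
  refine sum_congr rfl fun i _ => ?_
  rw [sum_eq_single i (fun j _ hji => by rw [hv hji.symm, mul_zero, mul_zero]) (by simp),
    inner_self_eq_norm_sq_to_K, mul_assoc]

theorem norm_sum_smul_sq_of_pairwise_orthogonal (c : ι → 𝕜) :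
    ‖∑ i, c i • v i‖ ^ 2 = ∑ i, ‖c i‖ ^ 2 * ‖v i‖ ^ 2 := by
  have := inner_sum_smul_sum_smul_of_pairwise_orthogonal hv c c
  simp_rw [inner_self_eq_norm_sq_to_K, RCLike.conj_mul] at this
  exact_mod_cast this

end Orthogonal

theorem tendsto_of_sq_add_le_sq_of_le {ι : Type*} {l : Filter ι} {f e : ι → ℝ} {a : ℝ}
    (hf : ∀ i, 0 ≤ f i) (ha : 0 ≤ a) (he : Tendsto e l (𝓝 0)) (hlower : ∀ i, a ^ 2 + e i ≤ f i ^ 2)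
    (hupper : ∀ i, f i ≤ a) : Tendsto f l (𝓝 a) := by
  have hsq : Tendsto (fun i => f i ^ 2) l (𝓝 (a ^ 2)) := by
    refine tendsto_of_tendsto_of_tendsto_of_le_of_le ?_ tendsto_const_nhds hlower
      fun i => pow_le_pow_left₀ (hf i) (hupper i) 2
    simpa using he.const_add (a ^ 2)
  simpa [Real.sqrt_sq, hf, ha] using hsq.sqrt

section Projections

variable {H : Type*} [NormedAddCommGroup H] [InnerProductSpace ℂ H]
  {p : Fin N → H →L[ℂ] H} (hc : ∀ i j, Commute (p i) (p j)) (ψ : H)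
include hc

theorem sum_prodInOut_apply : ∑ S, prodInOut p S ψ = ψ := by
  rw [← _root_.sum_apply, sum_prodInOut_of_commute hc, one_apply_eq_self]

variable [CompleteSpace H] (hp : ∀ i, IsStarProjection (p i))
include hp

theorem pairwise_inner_prodInOut_apply_eq_zero :
    Pairwise fun S T => ⟪prodInOut p S ψ, prodInOut p T ψ⟫_ℂ = 0 := by
  intro S T hST
  have hsym := (isStarProjection_prodInOut hp hc S).isSelfAdjoint.isSymmetric ψ (prodInOut p T ψ)
  rw [ContinuousLinearMap.coe_coe] at hsym
  rw [hsym, ← mul_apply_eq_comp,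
    prodInOut_mul_prodInOut_of_commute hc (fun i => (hp i).isIdempotentElem) hST]
  simp

theorem sum_sub_apply_eq_sum_card_smul_prodInOut_apply :
    ∑ i, (ψ - p i ψ) = ∑ S, (#S : ℂ) • prodInOut p S ψ := by
  calc ∑ i, (ψ - p i ψ) = ∑ S, ∑ i, ((1 - p i) * prodInOut p S) ψ := by
        rw [sum_comm]
        simp_rw [mul_apply_eq_comp, ← map_sum, sum_prodInOut_apply hc, sub_apply,
          one_apply_eq_self]
    _ = ∑ S, (#S • prodInOut p S) ψ := by
        simp_rw [← _root_.sum_apply,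
          sum_one_sub_mul_prodInOut_of_commute hc (fun i => (hp i).isIdempotentElem)]
    _ = ∑ S, (#S : ℂ) • prodInOut p S ψ := by
        simp [Nat.cast_smul_eq_nsmul]

theorem norm_sum_smul_prodInOut_apply_sq (c : Finset (Fin N) → ℂ) :
    ‖∑ S, c S • prodInOut p S ψ‖ ^ 2 = ∑ S, ‖c S‖ ^ 2 * ‖prodInOut p S ψ‖ ^ 2 :=
  norm_sum_smul_sq_of_pairwise_orthogonal (pairwise_inner_prodInOut_apply_eq_zero hc ψ hp) c

theorem norm_sq_eq_sum_norm_prodInOut_apply_sq :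
    ‖ψ‖ ^ 2 = ∑ S, ‖prodInOut p S ψ‖ ^ 2 := by
  simpa [sum_prodInOut_apply hc] using norm_sum_smul_prodInOut_apply_sq hc ψ hp 1

theorem re_inner_sum_sub_apply :
    (⟪∑ i, (ψ - p i ψ), ψ⟫_ℂ).re = ∑ S, #S * ‖prodInOut p S ψ‖ ^ 2 := by
  calc (⟪∑ i, (ψ - p i ψ), ψ⟫_ℂ).re
      = (⟪∑ S, (#S : ℂ) • prodInOut p S ψ, ∑ S, (1 : ℂ) • prodInOut p S ψ⟫_ℂ).re := by
        simp only [one_smul, sum_prodInOut_apply hc,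
          sum_sub_apply_eq_sum_card_smul_prodInOut_apply hc ψ hp]
    _ = ∑ S, #S * ‖prodInOut p S ψ‖ ^ 2 := by
        rw [inner_sum_smul_sum_smul_of_pairwise_orthogonal
          (pairwise_inner_prodInOut_apply_eq_zero hc ψ hp)]
        simp [← Complex.ofReal_pow]

theorem norm_sum_exp_smul_prodInOut_apply_sq (β : ℂ) :
    ‖∑ S, Complex.exp (β * #S) • prodInOut p S ψ‖ ^ 2 =
      ∑ S, Real.exp (2 * β.re * #S) * ‖prodInOut p S ψ‖ ^ 2 := by
  rw [norm_sum_smul_prodInOut_apply_sq hc ψ hp]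
  refine sum_congr rfl fun S _ => ?_
  rw [Complex.norm_exp, ← Real.exp_nat_mul]
  simp only [Complex.mul_re, Complex.natCast_re, Complex.natCast_im, mul_zero, sub_zero,
    Nat.cast_ofNat, mul_assoc]

theorem norm_sum_exp_smul_prodInOut_apply_le {β : ℂ} (hβ : β.re ≤ 0) :
    ‖∑ S, Complex.exp (β * #S) • prodInOut p S ψ‖ ≤ ‖ψ‖ := by
  rw [← pow_le_pow_iff_left₀ (norm_nonneg _) (norm_nonneg _) two_ne_zero,
    norm_sum_exp_smul_prodInOut_apply_sq hc ψ hp, norm_sq_eq_sum_norm_prodInOut_apply_sq hc ψ hp]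
  refine sum_le_sum fun S _ => mul_le_of_le_one_left (sq_nonneg _) (Real.exp_le_one_iff.2 ?_)
  have : (0 : ℝ) ≤ #S := Nat.cast_nonneg _
  nlinarith

theorem sq_norm_add_le_norm_sum_exp_smul_prodInOut_apply_sq (β : ℂ) :
    ‖ψ‖ ^ 2 + 2 * β.re * (⟪∑ i, (ψ - p i ψ), ψ⟫_ℂ).re ≤
      ‖∑ S, Complex.exp (β * #S) • prodInOut p S ψ‖ ^ 2 := by
  rw [norm_sum_exp_smul_prodInOut_apply_sq hc ψ hp,
    norm_sq_eq_sum_norm_prodInOut_apply_sq hc ψ hp, re_inner_sum_sub_apply hc ψ hp, mul_sum,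
    ← sum_add_distrib]
  refine sum_le_sum fun S _ => ?_
  calc ‖prodInOut p S ψ‖ ^ 2 + 2 * β.re * (#S * ‖prodInOut p S ψ‖ ^ 2)
      = (2 * β.re * #S + 1) * ‖prodInOut p S ψ‖ ^ 2 := by ring
    _ ≤ _ := mul_le_mul_of_nonneg_right (Real.add_one_le_exp _) (sq_nonneg _)

end Projections

/-- Key estimate: for pairwise commuting orthogonal projections `P^{(n)}_i`, `i = 1, …, 2^n`,
whose averaged defects `2^{-n} ∑ i (x - P^{(n)}_i x)` tend to `0`, and `γ` with `Re γ ≤ 0`,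
the norm of `∑_{S ⊆ {1,…,2^n}} e^{γ #S / 2^n} E^{(n)}_S ψ` tends to `‖ψ‖`. -/
theorem norm_sum_exp_projection_products_tendsto
    {H : Type*} [NormedAddCommGroup H] [InnerProductSpace ℂ H] [CompleteSpace H]
    (γ : ℂ) (hγ : γ.re ≤ 0)
    (P : (n : ℕ) → Fin (2 ^ n) → H →L[ℂ] H)
    (hidem : ∀ n i, IsIdempotentElem (P n i))
    (hsa : ∀ n i, IsSelfAdjoint (P n i))
    (hcomm : ∀ n i j, Commute (P n i) (P n j))
    (havg : ∀ x : H,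
      Tendsto (fun n => ((2 : ℝ) ^ n)⁻¹ • ∑ i : Fin (2 ^ n), (x - P n i x)) atTop (𝓝 0))
    (ψ : H) :
    Tendsto
      (fun n => ‖∑ S : Finset (Fin (2 ^ n)),
        Complex.exp (γ * (S.card : ℂ) / (2 : ℂ) ^ n) • (prodInOut (P n) S) ψ‖)
      atTop (𝓝 ‖ψ‖) := by
  have hP n i : IsStarProjection (P n i) := ⟨hidem n i, hsa n i⟩
  have hre n : (γ / 2 ^ n).re = γ.re / 2 ^ n := by simpa using Complex.div_ofReal_re γ (2 ^ n)
  have hdefect : Tendsto (fun n : ℕ =>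
      2 * γ.re * (⟪((2 : ℝ) ^ n)⁻¹ • ∑ i, (ψ - P n i ψ), ψ⟫_ℂ).re) atTop (𝓝 0) := by
    have h := (havg ψ).inner (𝕜 := ℂ) (tendsto_const_nhds (x := ψ))
    rw [inner_zero_left] at h
    have h' := ((Complex.continuous_re.tendsto 0).comp h).const_mul (2 * γ.re)
    rwa [Complex.zero_re, mul_zero] at h'
  simp_rw [mul_div_right_comm γ]
  refine tendsto_of_sq_add_le_sq_of_le (fun n => norm_nonneg _) (norm_nonneg ψ) hdefect
    (fun n => ?_) (fun n => ?_)
  · convert sq_norm_add_le_norm_sum_exp_smul_prodInOut_apply_sq (hcomm n) ψ (hP n) (γ / 2 ^ n)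
      using 2
    rw [hre, RCLike.real_smul_eq_coe_smul (K := ℂ), inner_smul_real_left, Complex.smul_re,
      smul_eq_mul]
    ring
  · refine norm_sum_exp_smul_prodInOut_apply_le (hcomm n) ψ (hP n) ?_
    rw [hre]
    exact div_nonpos_of_nonpos_of_nonneg hγ (by positivity)
end

section
/- Let f : [0,∞) → ℂ be Lebesgue measurable with f(s+t) = f(s)·f(t) for all s, t ≥ 0, |f(t)| ≤ 1 for all t ≥ 0, and f(t) ≠ 0 for all t ≥ 0. Then there exists γ ∈ ℂ with Re γ ≤ 0 such that f(t) = e^{γ t} for all t ≥ 0. -/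
/-!
Integrating the functional equation over `[t, t + h]` gives `f t * ∫₀ʰ f = ∫ₜ^{t+h} f`. By the
Lebesgue differentiation theorem `∫₀ʰ f ≠ 0` for some `h > 0`, since `f` vanishes nowhere; then
`f` agrees on `[0, ∞)` with a continuous function, and applying the same identity to that
continuous version shows that `f` agrees with a differentiable function `φ` satisfying
`φ' = γ φ` for `γ = (f h - 1) / ∫₀ʰ f`. Hence `f t = exp (γ t)`, and `‖f 1‖ ≤ 1` gives
`Re γ ≤ 0`.
-/

open MeasureTheory Set Filter intervalIntegral

theorem nullMeasurable_indicator_of_preimage_inter {α β : Type*} [MeasurableSpace α]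
    [MeasurableSpace β] [Zero β] {μ : Measure α} {S : Set α} (hS : MeasurableSet S) {f : α → β}
    (hf : ∀ s, MeasurableSet s → NullMeasurableSet (f ⁻¹' s ∩ S) μ) :
    NullMeasurable (S.indicator f) μ := by
  intro s hs
  rw [indicator_preimage, Set.ite]
  exact (hf s hs).union ((measurable_const hs).diff hS).nullMeasurableSet

theorem locallyIntegrable_indicator_of_preimage_inter {α E : Type*} [MeasurableSpace α]
    [TopologicalSpace α] [NormedAddCommGroup E] [MeasurableSpace E] [BorelSpace E]
    [SecondCountableTopology E] {μ : Measure α} [IsLocallyFiniteMeasure μ] {S : Set α}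
    (hS : MeasurableSet S) {f : α → E}
    (hf : ∀ s, MeasurableSet s → NullMeasurableSet (f ⁻¹' s ∩ S) μ) {C : ℝ}
    (hbdd : ∀ x ∈ S, ‖f x‖ ≤ C) : LocallyIntegrable (S.indicator f) μ := by
  have hf_meas : AEMeasurable f (μ.restrict S) :=
    (aemeasurable_indicator_iff hS).1
      (nullMeasurable_indicator_of_preimage_inter hS hf).aemeasurable
  refine ((memLp_indicator_iff_restrict hS).2 ?_).locallyIntegrable le_top
  exact memLp_top_of_bound hf_meas.aestronglyMeasurable C (ae_restrict_of_forall_mem hS hbdd)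

theorem exists_pos_intervalIntegral_ne_zero {E : Type*} [NormedAddCommGroup E]
    [NormedSpace ℝ E] [CompleteSpace E] {g : ℝ → E} (hg : LocallyIntegrable g volume)
    (hne : ∀ t, 0 < t → g t ≠ 0) : ∃ h, 0 < h ∧ ∫ x in 0..h, g x ≠ 0 := by
  by_contra! hzero
  have hae : ∀ᵐ x ∂volume.restrict (Ioi (0 : ℝ)),
      0 < x ∧ HasDerivAt (fun y => ∫ t in 0..y, g t) (g x) x := by
    filter_upwards [ae_restrict_mem measurableSet_Ioi,
      ae_restrict_of_ae (LocallyIntegrable.ae_hasDerivAt_integral hg)] with x hx hderiv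
    using ⟨hx, hderiv 0⟩
  have : (ae (volume.restrict (Ioi (0 : ℝ)))).NeBot := by
    rw [ae_neBot]
    simp [Real.volume_Ioi]
  obtain ⟨x, hx, hderiv⟩ := hae.exists
  have hconst : (fun y => ∫ t in 0..y, g t) =ᶠ[nhds x] fun _ => 0 := by
    filter_upwards [Ioi_mem_nhds hx] with y hy using hzero y hy
  exact hne x hx (hderiv.unique ((hasDerivAt_const x 0).congr_of_eventuallyEq hconst))

section Shift

variable {E : Type*} [NormedAddCommGroup E] [NormedSpace ℝ E] {g : ℝ → E}

theorem continuous_integral_shift (hg : ∀ a b, IntervalIntegrable g volume a b) (h : ℝ) :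
    Continuous fun t => ∫ x in t..t + h, g x := by
  have : (fun t => ∫ x in t..t + h, g x) =
      fun t => (∫ x in 0..t + h, g x) - ∫ x in 0..t, g x :=
    funext fun t => (integral_interval_sub_left (hg 0 _) (hg 0 _)).symm
  rw [this]
  exact ((continuous_primitive hg 0).comp (continuous_add_const h)).sub
    (continuous_primitive hg 0)

theorem hasDerivAt_integral_shift [CompleteSpace E] (hg : Continuous g) (h t : ℝ) :
    HasDerivAt (fun t => ∫ x in t..t + h, g x) (g (t + h) - g t) t := by
  have : (fun t => ∫ x in t..t + h, g x) =
      fun t => (∫ x in 0..t + h, g x) - ∫ x in 0..t, g x :=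
    funext fun t => (integral_interval_sub_left (hg.intervalIntegrable 0 _)
      (hg.intervalIntegrable 0 _)).symm
  rw [this]
  exact ((hg.integral_hasStrictDerivAt 0 (t + h)).hasDerivAt.comp_add_const t h).sub
    (hg.integral_hasStrictDerivAt 0 t).hasDerivAt

end Shift

theorem mul_intervalIntegral_eq_integral_shift {𝕜 : Type*} [NormedDivisionRing 𝕜]
    [NormedAlgebra ℝ 𝕜] {g : ℝ → 𝕜} (hmul : ∀ s t, 0 ≤ s → 0 ≤ t → g (s + t) = g s * g t)
    {h t : ℝ} (hh : 0 ≤ h) (ht : 0 ≤ t) :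
    g t * ∫ x in 0..h, g x = ∫ x in t..t + h, g x := by
  have hshift : ∫ x in 0..h, g (t + x) = ∫ x in t..t + h, g x := by simp
  rw [← hshift, ← intervalIntegral.integral_const_mul]
  refine integral_congr fun x hx => ?_
  rw [uIcc_of_le hh] at hx
  exact (hmul t x ht hx.1).symm

theorem exists_hasDerivAt_eqOn_Ici_of_mul {g : ℝ → ℂ}
    (hg : ∀ a b, IntervalIntegrable g volume a b)
    (hmul : ∀ s t, 0 ≤ s → 0 ≤ t → g (s + t) = g s * g t) {h : ℝ} (hh : 0 ≤ h)
    (hI : ∫ x in 0..h, g x ≠ 0) :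
    ∃ φ : ℝ → ℂ, EqOn g φ (Ici 0) ∧
      ∀ t, 0 ≤ t → HasDerivAt φ ((g (t + h) - g t) / ∫ x in 0..h, g x) t := by
  set I := ∫ x in 0..h, g x
  have eqOn_integral_shift_div : ∀ g : ℝ → ℂ, (∀ s t, 0 ≤ s → 0 ≤ t → g (s + t) = g s * g t) →
      ∫ x in 0..h, g x = I → EqOn g (fun t => (∫ x in t..t + h, g x) / I) (Ici 0) :=
    fun g hmul hgI t ht => by
      rw [eq_div_iff hI, ← hgI, mul_intervalIntegral_eq_integral_shift hmul hh ht]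
  set g₁ := fun t => (∫ x in t..t + h, g x) / I
  have hg₁ : EqOn g g₁ (Ici 0) := eqOn_integral_shift_div g hmul rfl
  have hg₁_cont : Continuous g₁ := (continuous_integral_shift hg h).div_const I
  have hg₁_mul : ∀ s t, 0 ≤ s → 0 ≤ t → g₁ (s + t) = g₁ s * g₁ t := fun s t hs ht => by
    rw [← hg₁ (add_nonneg hs ht : 0 ≤ s + t), ← hg₁ hs, ← hg₁ ht, hmul s t hs ht]
  have hg₁I : ∫ x in 0..h, g₁ x = I :=
    integral_congr fun x hx => (hg₁ (uIcc_of_le hh ▸ hx).1).symm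
  refine ⟨_, hg₁.trans (eqOn_integral_shift_div g₁ hg₁_mul hg₁I), fun t ht => ?_⟩
  rw [hg₁ (add_nonneg ht hh : 0 ≤ t + h), hg₁ ht]
  exact (hasDerivAt_integral_shift hg₁_cont h t).div_const I

theorem eq_mul_exp_of_hasDerivAt {φ : ℝ → ℂ} {γ : ℂ}
    (hφ : ∀ t, 0 ≤ t → HasDerivAt φ (γ * φ t) t) {t : ℝ} (ht : 0 ≤ t) :
    φ t = φ 0 * Complex.exp (γ * t) := by
  set u := fun s : ℝ => φ s * Complex.exp (-(γ * s))
  have hexp : ∀ s : ℝ, HasDerivAt (fun s : ℝ => Complex.exp (-(γ * s)))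
      (-γ * Complex.exp (-(γ * s))) s := fun s => by
    simpa [mul_comm] using ((Complex.ofRealCLM.hasDerivAt (x := s)).const_mul γ).neg.cexp
  have hu : ∀ s, 0 ≤ s → HasDerivAt u 0 s := fun s hs =>
    ((hφ s hs).mul (hexp s)).congr_deriv (by ring)
  have := constant_of_has_deriv_right_zero
    (fun s hs => (hu s hs.1).continuousAt.continuousWithinAt)
    (fun s hs => (hu s hs.1).hasDerivWithinAt) t (right_mem_Icc.2 ht)
  simp only [u, Complex.ofReal_zero, mul_zero, neg_zero, Complex.exp_zero, mul_one] at this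
  rw [← this, mul_assoc, ← Complex.exp_add, neg_add_cancel, Complex.exp_zero, mul_one]

/-- A Lebesgue measurable, contractive, nowhere vanishing multiplicative semigroup
`f : [0,∞) → ℂ` is of the form `f t = e^{γ t}` for some `γ` with `Re γ ≤ 0`. -/
theorem measurable_contractive_semigroup_eq_exp
    (f : ℝ → ℂ)
    (hmeas : ∀ s : Set ℂ, MeasurableSet s →
      MeasureTheory.NullMeasurableSet (f ⁻¹' s ∩ Set.Ici 0) MeasureTheory.volume)
    (hmul : ∀ s t : ℝ, 0 ≤ s → 0 ≤ t → f (s + t) = f s * f t)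
    (hbdd : ∀ t : ℝ, 0 ≤ t → ‖f t‖ ≤ 1)
    (hne : ∀ t : ℝ, 0 ≤ t → f t ≠ 0) :
    ∃ γ : ℂ, γ.re ≤ 0 ∧ ∀ t : ℝ, 0 ≤ t → f t = Complex.exp (γ * t) := by
  have hf0 : f 0 = 1 := by
    have h00 := hmul 0 0 le_rfl le_rfl
    rw [add_zero, eq_comm, mul_eq_left₀ (hne 0 le_rfl)] at h00
    exact h00
  set g := (Ici (0 : ℝ)).indicator f
  have hgf : EqOn g f (Ici 0) := fun t ht => indicator_of_mem ht f
  have hg_mul : ∀ s t, 0 ≤ s → 0 ≤ t → g (s + t) = g s * g t := fun s t hs ht => by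
    rw [hgf hs, hgf ht, hgf (add_nonneg hs ht : 0 ≤ s + t), hmul s t hs ht]
  have hg_int : LocallyIntegrable g volume :=
    locallyIntegrable_indicator_of_preimage_inter measurableSet_Ici hmeas hbdd
  obtain ⟨h, hh, hI⟩ := exists_pos_intervalIntegral_ne_zero hg_int
    fun t ht => (hgf ht.le).symm ▸ hne t ht.le
  obtain ⟨φ, hgφ, hφ⟩ := exists_hasDerivAt_eqOn_Ici_of_mul
    (fun _ _ => (hg_int.integrableOn_isCompact isCompact_uIcc).intervalIntegrable) hg_mul hh.le hI
  set γ := (f h - 1) / ∫ x in 0..h, g x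
  have hφγ : ∀ t, 0 ≤ t → HasDerivAt φ (γ * φ t) t := fun t ht => by
    convert hφ t ht using 1
    rw [hg_mul t h ht hh.le, ← hgφ ht, hgf ht, hgf hh.le]
    ring
  have hexp : ∀ t, 0 ≤ t → f t = Complex.exp (γ * t) := fun t ht => by
    rw [← hgf ht, hgφ ht, eq_mul_exp_of_hasDerivAt hφγ ht, ← hgφ self_mem_Ici, hgf self_mem_Ici,
      hf0, one_mul]
  refine ⟨γ, ?_, hexp⟩
  have h1 := hbdd 1 zero_le_one
  rwa [hexp 1 zero_le_one, Complex.ofReal_one, mul_one, Complex.norm_exp,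
    Real.exp_le_one_iff] at h1
end
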